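/- arXiv:math/0501268 — 2 statements merged into one kernel-verified Lean document; each statement's English description precedes it below -/
import Mathlib

section
/- For any u, v ≥ 0, the standard one-dimensional Gaussian measure satisfies γ₁((u+v, ∞)) ≤ e^{-uv} · γ₁((u, ∞)). -/
open MeasureTheory ProbabilityTheory Set

/-- For any `u, v ≥ 0`, the standard Gaussian measure on `ℝ` satisfies
`γ₁((u+v, ∞)) ≤ e^{-uv} · γ₁((u, ∞))`. -/
theorem gaussian_tail_shift (u v : ℝ) (hu : 0 ≤ u) (hv : 0 ≤ v) :
    gaussianReal 0 1 (Ioi (u + v)) ≤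
      ENNReal.ofReal (Real.exp (-(u * v))) * gaussianReal 0 1 (Ioi u) := by
  rw [gaussianReal_apply_eq_integral 0 one_ne_zero, gaussianReal_apply_eq_integral 0 one_ne_zero]
  rw [← ENNReal.ofReal_mul (Real.exp_nonneg _)]
  apply ENNReal.ofReal_le_ofReal
  have key : (∫ x in Ioi (u + v), gaussianPDFReal 0 1 x)
      = ∫ x in Ioi u, gaussianPDFReal 0 1 (x + v) := by
    have hmp : MeasurePreserving (fun x : ℝ => x + v) volume volume :=
      measurePreserving_add_right volume v
    have := hmp.setIntegral_preimage_emb (measurableEmbedding_addRight v)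
      (gaussianPDFReal 0 1) (Ioi (u + v))
    rw [← this]
    congr 1
    ext x
    simp [lt_sub_iff_add_lt, sub_lt_iff_lt_add]
  rw [key, ← integral_const_mul]
  apply setIntegral_mono_on
  · exact ((integrable_gaussianPDFReal 0 1).comp_add_right v).integrableOn
  · exact (((integrable_gaussianPDFReal 0 1)).const_mul (Real.exp (-(u * v)))).integrableOn
  · exact measurableSet_Ioi
  · intro x hx
    simp only [gaussianPDFReal, NNReal.coe_one, mul_one, sub_zero]
    rw [mul_comm (Real.exp _), mul_assoc, ← Real.exp_add]
    apply mul_le_mul_of_nonneg_left _ (by positivity)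
    apply Real.exp_le_exp.mpr
    have hx' : u ≤ x := le_of_lt hx
    nlinarith [sq_nonneg v, mul_le_mul_of_nonneg_right hx' hv]
end

section
/- There exist positive numbers w and a such that γ₂(B₂²(0,w)) = γ₁((-a,a)) and the Gaussian surface measures satisfy γ₂⁺(B₂²(0,w)) > γ₁⁺((-a,a)); equivalently, w·e^{-w²/2} > (2/√(2π))·e^{-a²/2}. -/
open MeasureTheory ProbabilityTheory
open scoped ENNReal

/-- The standard Gaussian probability measure on `ℝⁿ` (Euclidean space). -/
noncomputable def stdGaussian (n : ℕ) : Measure (EuclideanSpace ℝ (Fin n)) :=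
  Measure.map (MeasurableEquiv.toLp 2 (Fin n → ℝ))
    (Measure.pi fun _ => gaussianReal 0 1)

/-!
Take `w = 11`. In polar coordinates `γ₂(B(0, w)) = 1 - e^{-w²/2}`, while
`γ₁((-a, a)) = 1 - 2 T(a)` for the Gaussian tail `T(a) = ∫_a^∞ φ`, so `a` is determined by
`2 T(a) = e^{-w²/2}`. The Mills-ratio bounds `a / (a² + 1) · φ(a) ≤ T(a) ≤ φ(a) / a` first give
`a ≥ 9`, then `a e^{-w²/2} ≤ e^{-a²/2}`, which forces `w > a + 1/a`, and finally
`2 φ(a) ≤ (a + 1/a) · 2 T(a) < w e^{-w²/2}`.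
-/

open Set Filter Topology Real

local notation "φ" => gaussianPDFReal 0 1

lemma gaussianPDFReal_zero_one (x : ℝ) : φ x = (√(2 * π))⁻¹ * exp (-x ^ 2 / 2) := by
  simp [gaussianPDFReal]

lemma two_le_sqrt_two_mul_pi : 2 ≤ √(2 * π) :=
  le_sqrt_of_sq_le (by nlinarith [pi_gt_three])

lemma sqrt_two_mul_pi_le_three : √(2 * π) ≤ 3 :=
  (sqrt_le_left (by norm_num)).mpr (by nlinarith [pi_lt_d2])

lemma gaussianPDFReal_zero_one_le (x : ℝ) : φ x ≤ exp (-x ^ 2 / 2) / 2 := by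
  rw [gaussianPDFReal_zero_one, inv_mul_eq_div]
  exact div_le_div_of_nonneg_left (exp_pos _).le two_pos two_le_sqrt_two_mul_pi

lemma le_gaussianPDFReal_zero_one (x : ℝ) : exp (-x ^ 2 / 2) / 3 ≤ φ x := by
  rw [gaussianPDFReal_zero_one, inv_mul_eq_div]
  exact div_le_div_of_nonneg_left (exp_pos _).le (by positivity) sqrt_two_mul_pi_le_three

lemma hasDerivAt_gaussianPDFReal_zero_one (x : ℝ) : HasDerivAt φ (-x * φ x) x := by
  have h : HasDerivAt (fun y : ℝ => -y ^ 2 / 2) (-x) x := by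
    simpa using ((hasDerivAt_pow 2 x).fun_neg.div_const 2).congr_deriv (by ring)
  rw [funext gaussianPDFReal_zero_one]
  exact (h.exp.const_mul _).congr_deriv (by ring)

lemma tendsto_gaussianPDFReal_zero_one_atTop : Tendsto φ atTop (𝓝 0) := by
  have h : Tendsto (fun x : ℝ => -x ^ 2 / 2) atTop atBot :=
    (tendsto_neg_atTop_atBot.comp (tendsto_pow_atTop two_ne_zero)).atBot_div_const two_pos
  rw [funext gaussianPDFReal_zero_one]
  simpa using (tendsto_exp_atBot.comp h).const_mul (√(2 * π))⁻¹

noncomputable def gaussianTail (a : ℝ) : ℝ := ∫ x in Ioi a, φ x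

lemma gaussianTail_le_div {a : ℝ} (ha : 0 < a) : gaussianTail a ≤ φ a / a := by
  have hderiv : ∀ x ∈ Ici a, HasDerivAt (fun x => -(φ x / x)) (φ x * (1 + (x ^ 2)⁻¹)) x := by
    intro x hx
    have hx0 : x ≠ 0 := (ha.trans_le hx).ne'
    refine ((hasDerivAt_gaussianPDFReal_zero_one x).div (hasDerivAt_id x) hx0).neg.congr_deriv ?_
    simp only [id]
    field_simp
    ring
  have hnonneg : ∀ x ∈ Ioi a, 0 ≤ φ x * (1 + (x ^ 2)⁻¹) :=
    fun x _ => mul_nonneg (gaussianPDFReal_nonneg _ _ _) (by positivity)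
  have hlim : Tendsto (fun x => -(φ x / x)) atTop (𝓝 0) := by
    simpa [div_eq_mul_inv] using
      (tendsto_gaussianPDFReal_zero_one_atTop.mul tendsto_inv_atTop_zero).neg
  calc gaussianTail a ≤ ∫ x in Ioi a, φ x * (1 + (x ^ 2)⁻¹) := by
        refine setIntegral_mono_on (integrable_gaussianPDFReal 0 1).integrableOn
          (integrableOn_Ioi_deriv_of_nonneg' hderiv hnonneg hlim) measurableSet_Ioi fun x _ => ?_
        have := gaussianPDFReal_nonneg 0 1 x
        nlinarith [inv_nonneg.mpr (sq_nonneg x)]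
    _ = φ a / a := by
        rw [integral_Ioi_of_hasDerivAt_of_nonneg' hderiv hnonneg hlim]
        ring

lemma div_mul_le_gaussianTail (a : ℝ) : a / (a ^ 2 + 1) * φ a ≤ gaussianTail a := by
  set f' : ℝ → ℝ := fun x => φ x * (1 - 2 / (x ^ 2 + 1) ^ 2)
  have hderiv : ∀ x ∈ Ici a, HasDerivAt (fun x => -(x / (x ^ 2 + 1) * φ x)) (f' x) x := by
    intro x _
    have hq : HasDerivAt (fun x : ℝ => x ^ 2 + 1) (2 * x) x := by
      simpa using (hasDerivAt_pow 2 x).add_const 1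
    refine (((hasDerivAt_id' x).fun_div hq (by positivity)).mul
      (hasDerivAt_gaussianPDFReal_zero_one x)).neg.congr_deriv ?_
    simp only [f']
    field_simp
    ring
  -- `f'` is negative near `0`, so its integrability comes from domination by `φ`.
  have hbound : ∀ x, ‖f' x‖ ≤ φ x := by
    intro x
    have h0 : 0 ≤ 2 / (x ^ 2 + 1) ^ 2 := by positivity
    have h2 : 2 / (x ^ 2 + 1) ^ 2 ≤ 2 :=
      div_le_self zero_le_two (one_le_pow₀ (by nlinarith [sq_nonneg x]))
    rw [norm_mul, Real.norm_of_nonneg (gaussianPDFReal_nonneg _ _ _)]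
    exact mul_le_of_le_one_right (gaussianPDFReal_nonneg _ _ _)
      (abs_le.mpr ⟨by linarith, by linarith⟩)
  have hint : IntegrableOn f' (Ioi a) :=
    (integrable_gaussianPDFReal 0 1).integrableOn.mono'
      (((measurable_gaussianPDFReal 0 1).mul (by fun_prop)).aestronglyMeasurable)
      (ae_of_all _ hbound)
  have hlim : Tendsto (fun x => -(x / (x ^ 2 + 1) * φ x)) atTop (𝓝 0) := by
    have hq : Tendsto (fun x : ℝ => x / (x ^ 2 + 1)) atTop (𝓝 0) :=
      tendsto_of_tendsto_of_tendsto_of_le_of_le' tendsto_const_nhds tendsto_inv_atTop_zero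
        ((eventually_ge_atTop 0).mono fun x hx => by positivity)
        ((eventually_gt_atTop 0).mono fun x hx => by
          rw [div_le_iff₀ (by positivity), inv_mul_eq_div, le_div_iff₀ hx]; nlinarith)
    simpa using (hq.mul tendsto_gaussianPDFReal_zero_one_atTop).neg
  calc a / (a ^ 2 + 1) * φ a = ∫ x in Ioi a, f' x := by
        rw [integral_Ioi_of_hasDerivAt_of_tendsto' hderiv hint hlim]
        ring
    _ ≤ gaussianTail a := by
        refine setIntegral_mono_on hint (integrable_gaussianPDFReal 0 1).integrableOn
          measurableSet_Ioi fun x _ => ?_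
        have := gaussianPDFReal_nonneg 0 1 x
        have h0 : 0 ≤ 2 / (x ^ 2 + 1) ^ 2 := by positivity
        simp only [f']
        nlinarith

lemma gaussianTail_antitone : Antitone gaussianTail := fun _ _ hab =>
  setIntegral_mono_set (integrable_gaussianPDFReal 0 1).integrableOn
    (ae_of_all _ (gaussianPDFReal_nonneg 0 1)) (Ioi_subset_Ioi hab).eventuallyLE

lemma integral_Iic_neg_eq_gaussianTail (a : ℝ) : ∫ x in Iic (-a), φ x = gaussianTail a := by
  have hsymm (x : ℝ) : φ (-x) = φ x := by simp [gaussianPDFReal_zero_one]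
  rw [← integral_comp_neg_Ioi]
  simp only [hsymm]
  rfl

lemma intervalIntegral_gaussianPDFReal_neg_self (a : ℝ) :
    ∫ x in (-a)..a, φ x = 1 - 2 * gaussianTail a := by
  have hint : Integrable φ := integrable_gaussianPDFReal 0 1
  have hsplit := intervalIntegral.integral_interval_add_Ioi hint.integrableOn hint.integrableOn
    (a := -a) (b := a)
  have htotal := intervalIntegral.integral_Iic_add_Ioi hint.integrableOn hint.integrableOn (b := -a)
  rw [integral_gaussianPDFReal_eq_one 0 one_ne_zero, integral_Iic_neg_eq_gaussianTail] at htotal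
  rw [gaussianTail] at *
  linarith

lemma gaussianTail_zero : gaussianTail 0 = 1 / 2 := by
  have h := intervalIntegral_gaussianPDFReal_neg_self 0
  rw [neg_zero, intervalIntegral.integral_same] at h
  linarith

lemma gaussianReal_Ioo_neg_self {a : ℝ} (ha : 0 ≤ a) :
    gaussianReal 0 1 (Ioo (-a) a) = ENNReal.ofReal (1 - 2 * gaussianTail a) := by
  rw [gaussianReal_apply_eq_integral 0 one_ne_zero, ← integral_Ioc_eq_integral_Ioo,
    ← intervalIntegral.integral_of_le (neg_le_self ha), intervalIntegral_gaussianPDFReal_neg_self]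

lemma exists_gaussianTail_eq {p : ℝ} (hp : 0 < p) (hp' : p ≤ 1 / 2) :
    ∃ a, 0 ≤ a ∧ gaussianTail a = p := by
  have hlim : Tendsto (fun b => φ b / b) atTop (𝓝 0) := by
    simpa [div_eq_mul_inv] using tendsto_gaussianPDFReal_zero_one_atTop.mul tendsto_inv_atTop_zero
  obtain ⟨b, hbp, hb⟩ := ((hlim.eventually (gt_mem_nhds hp)).and (eventually_gt_atTop 0)).exists
  have hcont : ContinuousOn gaussianTail (Icc 0 b) :=
    ((integrable_gaussianPDFReal 0 1).integrableOn.continuousOn_Ici_primitive_Ioi).mono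
      Icc_subset_Ici_self
  obtain ⟨a, ⟨ha, -⟩, hTa⟩ := intermediate_value_Icc' hb.le hcont
    ⟨(gaussianTail_le_div hb).trans hbp.le, gaussianTail_zero ▸ hp'⟩
  exact ⟨a, ha, hTa⟩

lemma integral_mul_exp_neg_sq_div_two (w : ℝ) :
    ∫ r in (0 : ℝ)..w, r * exp (-r ^ 2 / 2) = 1 - exp (-w ^ 2 / 2) := by
  have hderiv (r : ℝ) : HasDerivAt (fun r : ℝ => -exp (-r ^ 2 / 2)) (r * exp (-r ^ 2 / 2)) r := by
    have h : HasDerivAt (fun y : ℝ => -y ^ 2 / 2) (-r) r := by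
      simpa using ((hasDerivAt_pow 2 r).fun_neg.div_const 2).congr_deriv (by ring)
    exact h.exp.fun_neg.congr_deriv (by ring)
  rw [intervalIntegral.integral_eq_sub_of_hasDerivAt (fun r _ => hderiv r)
    (by apply Continuous.intervalIntegrable; fun_prop)]
  simp
  ring

lemma gaussianPDFReal_zero_one_mul (x y : ℝ) :
    φ x * φ y = (2 * π)⁻¹ * exp (-(x ^ 2 + y ^ 2) / 2) := by
  rw [gaussianPDFReal_zero_one, gaussianPDFReal_zero_one, mul_mul_mul_comm, ← mul_inv,
    mul_self_sqrt (by positivity), ← exp_add]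
  ring_nf

lemma setIntegral_disk_gaussianPDFReal_mul {w : ℝ} (hw : 0 ≤ w) :
    ∫ p : ℝ × ℝ in {p | p.1 ^ 2 + p.2 ^ 2 ≤ w ^ 2}, φ p.1 * φ p.2 = 1 - exp (-w ^ 2 / 2) := by
  have hD : MeasurableSet {p : ℝ × ℝ | p.1 ^ 2 + p.2 ^ 2 ≤ w ^ 2} :=
    measurableSet_le (by fun_prop) measurable_const
  have hpolar : ∀ p ∈ polarCoord.target,
      p.1 • {p : ℝ × ℝ | p.1 ^ 2 + p.2 ^ 2 ≤ w ^ 2}.indicator (fun p => φ p.1 * φ p.2)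
        (polarCoord.symm p) =
      (Iic w).indicator (fun r => r * exp (-r ^ 2 / 2)) p.1 * (2 * π)⁻¹ := by
    rintro ⟨r, θ⟩ ⟨hr, -⟩
    have hsq : (r * cos θ) ^ 2 + (r * sin θ) ^ 2 = r ^ 2 := by
      linear_combination r ^ 2 * sin_sq_add_cos_sq θ
    have hmem : r ^ 2 ≤ w ^ 2 ↔ r ≤ w := sq_le_sq₀ hr.le hw
    simp only [polarCoord_symm_apply, indicator, mem_ofPred_eq, mem_Iic, hsq, hmem, smul_eq_mul]
    split_ifs
    · rw [gaussianPDFReal_zero_one_mul, hsq]; ring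
    · simp
  rw [← integral_indicator hD, ← integral_comp_polarCoord_symm,
    setIntegral_congr_fun polarCoord.open_target.measurableSet hpolar, polarCoord_target,
    Measure.volume_eq_prod,
    setIntegral_prod_mul (fun r => (Iic w).indicator _ r) fun _ => (2 * π)⁻¹,
    setIntegral_indicator measurableSet_Iic, Ioi_inter_Iic, ← intervalIntegral.integral_of_le hw,
    integral_mul_exp_neg_sq_div_two,
    setIntegral_const, Real.volume_real_Ioo_of_le (by linarith [pi_pos]), smul_eq_mul]
  field_simp
  ring

lemma gaussianReal_prod_self_disk {w : ℝ} (hw : 0 ≤ w) :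
    (gaussianReal 0 1).prod (gaussianReal 0 1) {p | p.1 ^ 2 + p.2 ^ 2 ≤ w ^ 2} =
      ENNReal.ofReal (1 - exp (-w ^ 2 / 2)) := by
  have hD : MeasurableSet {p : ℝ × ℝ | p.1 ^ 2 + p.2 ^ 2 ≤ w ^ 2} :=
    measurableSet_le (by fun_prop) measurable_const
  have hint : Integrable (fun p : ℝ × ℝ => φ p.1 * φ p.2) :=
    (integrable_gaussianPDFReal 0 1).mul_prod (integrable_gaussianPDFReal 0 1)
  rw [gaussianReal_of_var_ne_zero _ one_ne_zero, prod_withDensity (measurable_gaussianPDF _ _)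
    (measurable_gaussianPDF _ _), ← Measure.volume_eq_prod, withDensity_apply _ hD,
    ← setIntegral_disk_gaussianPDFReal_mul hw, ofReal_integral_eq_lintegral_ofReal hint.restrict
      (ae_of_all _ fun p =>
        mul_nonneg (gaussianPDFReal_nonneg _ _ _) (gaussianPDFReal_nonneg _ _ _))]
  simp only [gaussianPDF, ENNReal.ofReal_mul (gaussianPDFReal_nonneg _ _ _)]

lemma stdGaussian_two_closedBall {w : ℝ} (hw : 0 ≤ w) :
    stdGaussian 2 (Metric.closedBall 0 w) = ENNReal.ofReal (1 - exp (-w ^ 2 / 2)) := by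
  have hpre : MeasurableEquiv.toLp 2 (Fin 2 → ℝ) ⁻¹' Metric.closedBall 0 w =
      MeasurableEquiv.finTwoArrow ⁻¹' {p : ℝ × ℝ | p.1 ^ 2 + p.2 ^ 2 ≤ w ^ 2} := by
    ext x
    simp [EuclideanSpace.closedBall_zero_eq w hw, Fin.sum_univ_two, MeasurableEquiv.finTwoArrow]
  rw [_root_.stdGaussian, MeasurableEquiv.map_apply, hpre,
    (measurePreserving_finTwoArrow _).measure_preimage_equiv, gaussianReal_prod_self_disk hw]

lemma exp_two_lt_nine : exp 2 < 9 := by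
  have h : exp 2 = exp 1 * exp 1 := by rw [← exp_add]; norm_num
  nlinarith [exp_one_lt_d9, exp_pos 1]

lemma add_inv_lt_of_two_mul_gaussianTail_eq {w a : ℝ} (hw : 0 ≤ w) (ha : 9 ≤ a)
    (h : 2 * gaussianTail a = exp (-w ^ 2 / 2)) : a + a⁻¹ < w := by
  have ha0 : 0 < a := by linarith
  have hupper : a * exp (-w ^ 2 / 2) ≤ exp (-a ^ 2 / 2) := by
    have := gaussianTail_le_div ha0
    have := gaussianPDFReal_zero_one_le a
    rw [le_div_iff₀ ha0] at *
    nlinarith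
  by_contra! hle
  have hinv : a⁻¹ ≤ 1 := inv_le_one_of_one_le₀ (by linarith)
  have hsq : w ^ 2 - a ^ 2 ≤ 4 := by
    nlinarith [pow_le_pow_left₀ hw hle 2, mul_inv_cancel₀ ha0.ne', inv_pos.mpr ha0]
  have : a ≤ exp 2 := by
    calc a = a * exp (-w ^ 2 / 2) * exp ((w ^ 2 - a ^ 2) / 2) / exp (-a ^ 2 / 2) := by
          rw [mul_assoc, ← exp_add]; field_simp; ring_nf
      _ ≤ exp ((w ^ 2 - a ^ 2) / 2) := by
          rw [div_le_iff₀ (exp_pos _)]; nlinarith [exp_pos ((w ^ 2 - a ^ 2) / 2)]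
      _ ≤ exp 2 := exp_le_exp.mpr (by linarith)
  linarith [exp_two_lt_nine]

lemma two_mul_gaussianPDFReal_lt_of_two_mul_gaussianTail_eq {w a : ℝ} (hw : 0 ≤ w) (ha : 9 ≤ a)
    (h : 2 * gaussianTail a = exp (-w ^ 2 / 2)) : 2 * φ a < w * exp (-w ^ 2 / 2) := by
  have ha0 : 0 < a := by linarith
  calc 2 * φ a = (a + a⁻¹) * (2 * (a / (a ^ 2 + 1) * φ a)) := by field_simp
    _ ≤ (a + a⁻¹) * exp (-w ^ 2 / 2) := by
        rw [← h]; gcongr; exact div_mul_le_gaussianTail a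
    _ < w * exp (-w ^ 2 / 2) := by
        gcongr; exact add_inv_lt_of_two_mul_gaussianTail_eq hw ha h

lemma exp_neg_eleven_sq_div_two_lt_two_mul_gaussianTail_nine :
    exp (-11 ^ 2 / 2) < 2 * gaussianTail 9 := by
  have hsplit : exp (-11 ^ 2 / 2) = exp (-9 ^ 2 / 2) * exp (-20) := by
    rw [← exp_add]; norm_num
  have h20 : exp (-20) * exp 20 = 1 := by rw [← exp_add]; norm_num
  have : 21 ≤ exp 20 := by linarith [add_one_le_exp (20 : ℝ)]
  calc exp (-11 ^ 2 / 2) < 2 * (9 / (9 ^ 2 + 1) * (exp (-9 ^ 2 / 2) / 3)) := by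
        rw [hsplit]; nlinarith [exp_pos (-9 ^ 2 / 2), exp_pos (-20)]
    _ ≤ 2 * gaussianTail 9 := by
        gcongr
        exact (mul_le_mul_of_nonneg_left (le_gaussianPDFReal_zero_one 9) (by norm_num)).trans
          (div_mul_le_gaussianTail 9)

/-- There exist `w, a > 0` with `γ₂(B₂²(0,w)) = γ₁((-a,a))` and
`γ₂⁺(B₂²(0,w)) > γ₁⁺((-a,a))`, i.e. `w e^{-w²/2} > (2/√(2π)) e^{-a²/2}`. -/
theorem exists_disk_interval_boundary_gap :
    ∃ w a : ℝ, 0 < w ∧ 0 < a ∧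
      stdGaussian 2 (Metric.closedBall 0 w) = gaussianReal 0 1 (Set.Ioo (-a) a) ∧
      (2 / Real.sqrt (2 * Real.pi)) * Real.exp (-a ^ 2 / 2) <
        w * Real.exp (-w ^ 2 / 2) := by
  obtain ⟨a, ha0, hTa⟩ := exists_gaussianTail_eq (p := exp (-11 ^ 2 / 2) / 2) (by positivity)
    (by linarith [exp_le_one_iff.mpr (by norm_num : -11 ^ 2 / 2 ≤ (0 : ℝ))])
  have hTa' : 2 * gaussianTail a = exp (-11 ^ 2 / 2) := by rw [hTa]; ring
  have ha : 9 ≤ a := by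
    by_contra! h
    linarith [gaussianTail_antitone h.le, exp_neg_eleven_sq_div_two_lt_two_mul_gaussianTail_nine]
  refine ⟨11, a, by norm_num, by linarith, ?_, ?_⟩
  · rw [stdGaussian_two_closedBall (by norm_num), gaussianReal_Ioo_neg_self ha0, hTa']
  · have hφ : 2 / √(2 * π) * exp (-a ^ 2 / 2) = 2 * φ a := by
      rw [gaussianPDFReal_zero_one]; ring
    rw [hφ]
    exact two_mul_gaussianPDFReal_lt_of_two_mul_gaussianTail_eq (by norm_num) ha hTa'
end
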